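/- arXiv:1112.5718 — 4 statements merged into one kernel-verified Lean document; each statement's English description precedes it below -/
import Mathlib

section
/- For each f ∈ C(∂U) there exists a unique function G ∈ C(K) such that Φ(G_U) = G_U on U and G(x) = f(x) for all x ∈ ∂U. -/
open MeasureTheory Filter Topology ComplexOrder

/-- `Φ` is a Markov operator on the bounded Borel measurable functions on `U`:
for each `x` there is a Borel probability measure `P x` representing `Φ` at `x`. -/
def IsMarkovOperator {U : Type*} [MeasurableSpace U]
    (Φ : (U → ℂ) → (U → ℂ)) : Prop :=
  ∀ x : U, ∃ P : Measure U, IsProbabilityMeasure P ∧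
    ∀ f : U → ℂ, Measurable f → (∃ C : ℝ, ∀ y, ‖f y‖ ≤ C) →
      Φ f x = ∫ y, f y ∂P

/-- `Φ` has the strong Feller property: it maps bounded Borel measurable
functions to continuous functions. -/
def HasStrongFeller {U : Type*} [MeasurableSpace U] [TopologicalSpace U]
    (Φ : (U → ℂ) → (U → ℂ)) : Prop :=
  ∀ f : U → ℂ, Measurable f → (∃ C : ℝ, ∀ y, ‖f y‖ ≤ C) → Continuous (Φ f)

/-- Boundary condition (A): for each boundary point `x` there is a barrier
`h ∈ C(K)` with `h x = 0`, `h < 0` off `x`, and `Φ (h_U) ≥ h_U` on `U`. -/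
def CondA {K : Type*} [TopologicalSpace K] (U : Set K)
    (Φ : (↥U → ℂ) → (↥U → ℂ)) : Prop :=
  ∀ x ∈ Uᶜ, ∃ h : C(K, ℂ), h x = 0 ∧ (∀ y : K, y ≠ x → h y < 0) ∧
    ∀ u : ↥U, h u.1 ≤ Φ (fun v : ↥U => h v.1) u

/-- Maximum principle (B): every real-valued `g ∈ C(K)` with `Φ (g_U) ≥ g_U`
on `U` attaining its global maximum inside `U` is constant. -/
def CondB {K : Type*} [TopologicalSpace K] (U : Set K)
    (Φ : (↥U → ℂ) → (↥U → ℂ)) : Prop :=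
  ∀ g : C(K, ℂ), (∀ x : K, (g x).im = 0) →
    (∀ u : ↥U, g u.1 ≤ Φ (fun v : ↥U => g v.1) u) →
    (∃ z ∈ U, ∀ x : K, g x ≤ g z) →
    ∀ x y : K, g x = g y

/-- The map `Ψ` : `Ψ f = Φ (f_U)` on `U` and `Ψ f = f` on `∂U = K \ U`. -/
noncomputable def psiFun {K : Type*} (U : Set K)
    (Φ : (↥U → ℂ) → (↥U → ℂ)) (f : K → ℂ) : K → ℂ :=
  open Classical in fun x => if hx : x ∈ U then Φ (fun v : ↥U => f v.1) ⟨x, hx⟩ else f x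

/-!
Pushing the probabilities `P x` forward to `K` and putting a Dirac mass at each boundary point
turns `Φ` into a family of probability measures `μ` on `K`, and the problem into finding a
continuous `G` with `∫ G dμ x = G x` for all `x` and boundary values `f`. For real `f` this is
Perron's method: let `g` be the infimum of all continuous superharmonic functions lying above `f`
on `∂U`. Barriers from (A) show that `g = f` on `∂U`, and that `h x = ∫ g dμ x` is squeezed
between continuous sub- and superharmonic functions meeting at `f x₀` at each boundary point
`x₀`; on `U` it is continuous by the strong Feller property. So `h ≤ g` is itself a continuous
superharmonic majorant of `f`, whence `h = g` is the solution. Uniqueness is the comparison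
principle, which is the maximum principle (B) applied to the difference of two solutions.
-/

open Set

theorem ContinuousMap.integrable {X E : Type*} [TopologicalSpace X] [CompactSpace X]
    [MeasurableSpace X] [OpensMeasurableSpace X] [NormedAddCommGroup E]
    [SecondCountableTopology E] (μ : Measure X) [IsFiniteMeasure μ] (g : C(X, E)) :
    Integrable g μ :=
  .of_bound g.continuous.aestronglyMeasurable ‖g‖ (ae_of_all _ g.norm_coe_le_norm)

theorem IsCompact.exists_le_mul_of_pos {X : Type*} [TopologicalSpace X] {s : Set X}
    (hs : IsCompact s) {φ ψ : X → ℝ} (hφ : ContinuousOn φ s) (hψ : ContinuousOn ψ s)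
    (hpos : ∀ x ∈ s, 0 < ψ x) : ∃ C, 0 ≤ C ∧ ∀ x ∈ s, φ x ≤ C * ψ x := by
  obtain ⟨M, hM⟩ := hs.bddAbove_image (hφ.div hψ fun x hx => (hpos x hx).ne')
  refine ⟨max M 0, le_max_right _ _, fun x hx => ?_⟩
  have hx' : φ x / ψ x ≤ M := hM ⟨x, hx, rfl⟩
  rw [div_le_iff₀ (hpos x hx)] at hx'
  exact hx'.trans (mul_le_mul_of_nonneg_right (le_max_left M 0) (hpos x hx).le)

theorem continuousAt_of_squeeze {X : Type*} [TopologicalSpace X] {h : X → ℝ} {x₀ : X}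
    (hlow : ∀ a < h x₀, ∃ u : X → ℝ, ContinuousAt u x₀ ∧ (∀ x, u x ≤ h x) ∧ a < u x₀)
    (hup : ∀ b > h x₀, ∃ w : X → ℝ, ContinuousAt w x₀ ∧ (∀ x, h x ≤ w x) ∧ w x₀ < b) :
    ContinuousAt h x₀ := by
  refine tendsto_order.2 ⟨fun a ha => ?_, fun b hb => ?_⟩
  · obtain ⟨u, hu, hle, hau⟩ := hlow a ha
    exact (hu.eventually_const_lt hau).mono fun x hx => hx.trans_le (hle x)
  · obtain ⟨w, hw, hle, hwb⟩ := hup b hb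
    exact (hw.eventually_lt_const hwb).mono fun x hx => (hle x).trans_lt hx

section Harmonic

variable {K : Type*} [MeasurableSpace K]

def IsHarmonic {E : Type*} [NormedAddCommGroup E] [NormedSpace ℝ E]
    (μ : K → Measure K) (g : K → E) : Prop :=
  ∀ x, ∫ y, g y ∂μ x = g x

def IsSubharmonic (μ : K → Measure K) (g : K → ℝ) : Prop :=
  ∀ x, g x ≤ ∫ y, g y ∂μ x

def IsSuperharmonic (μ : K → Measure K) (g : K → ℝ) : Prop :=
  ∀ x, ∫ y, g y ∂μ x ≤ g x

variable {μ : K → Measure K}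

theorem IsHarmonic.isSubharmonic {g : K → ℝ} (hg : IsHarmonic μ g) : IsSubharmonic μ g :=
  fun x => (hg x).ge

theorem IsHarmonic.isSuperharmonic {g : K → ℝ} (hg : IsHarmonic μ g) : IsSuperharmonic μ g :=
  fun x => (hg x).le

theorem IsSuperharmonic.neg {g : K → ℝ} (hg : IsSuperharmonic μ g) : IsSubharmonic μ (-g) :=
  fun x => by simpa [integral_neg] using hg x

variable [TopologicalSpace K] {U : Set K}

variable (μ U) in
def HasStrongMaxPrinciple : Prop :=
  ∀ g : C(K, ℝ), IsSubharmonic μ g → ∀ z ∈ U, (∀ x, g x ≤ g z) → ∀ x, g x = g z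

variable (μ U) in
def HasBarriers : Prop :=
  ∀ x₀ ∈ Uᶜ, ∃ h : C(K, ℝ), h x₀ = 0 ∧ (∀ y, y ≠ x₀ → h y < 0) ∧ IsSubharmonic μ h

variable (μ U) in
def IsStrongFellerOn : Prop :=
  ∀ g : K → ℝ, Measurable g → (∃ C, ∀ x, ‖g x‖ ≤ C) → ContinuousOn (fun x => ∫ y, g y ∂μ x) U

variable (μ U) in
def upperClass (f : C(↥Uᶜ, ℝ)) : Set C(K, ℝ) :=
  {w | IsSuperharmonic μ w ∧ ∀ y : ↥Uᶜ, f y ≤ w y}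

variable (μ U) in
noncomputable def perron (f : C(↥Uᶜ, ℝ)) (x : K) : ℝ :=
  ⨅ w : upperClass μ U f, (w : C(K, ℝ)) x

variable [CompactSpace K] [OpensMeasurableSpace K] [∀ x, IsProbabilityMeasure (μ x)]

theorem IsSubharmonic.sub {u w : C(K, ℝ)} (hu : IsSubharmonic μ u) (hw : IsSuperharmonic μ w) :
    IsSubharmonic μ ⇑(u - w) := fun x => by
  change u x - w x ≤ ∫ y, u y - w y ∂μ x
  rw [integral_sub (u.integrable (μ x)) (w.integrable (μ x))]
  linarith [hu x, hw x]

theorem IsSubharmonic.isSuperharmonic_const_sub_mul {h : C(K, ℝ)} (hh : IsSubharmonic μ h)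
    (c : ℝ) {C : ℝ} (hC : 0 ≤ C) : IsSuperharmonic μ fun x => c - C * h x := fun x => by
  rw [integral_sub (integrable_const c) ((h.integrable (μ x)).const_mul C), integral_const,
    integral_const_mul]
  simp only [probReal_univ, one_smul]
  linarith [mul_le_mul_of_nonneg_left (hh x) hC]

theorem HasStrongMaxPrinciple.le_of_le_on_compl (hmax : HasStrongMaxPrinciple μ U)
    (hU : Uᶜ.Nonempty) {u w : C(K, ℝ)} (hu : IsSubharmonic μ u) (hw : IsSuperharmonic μ w)
    (hb : ∀ x ∈ Uᶜ, u x ≤ w x) (x : K) : u x ≤ w x := by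
  obtain ⟨a, ha⟩ := hU
  obtain ⟨z, -, hz⟩ := isCompact_univ.exists_isMaxOn ⟨a, mem_univ a⟩ (u - w).continuous.continuousOn
  have hz' : ∀ y, (u - w) y ≤ (u - w) z := fun y => hz (mem_univ y)
  have hdz : (u - w) z ≤ 0 := by
    by_cases hzU : z ∈ U
    · rw [← hmax _ (hu.sub hw) z hzU hz' a]
      simpa using hb a ha
    · simpa using hb z hzU
  simpa using (hz' x).trans hdz

theorem HasStrongMaxPrinciple.eq_of_eq_on_compl (hmax : HasStrongMaxPrinciple μ U)
    (hU : Uᶜ.Nonempty) {G G' : C(K, ℝ)} (hG : IsHarmonic μ G) (hG' : IsHarmonic μ G')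
    (hb : ∀ x ∈ Uᶜ, G x = G' x) : G = G' :=
  ContinuousMap.ext fun x => le_antisymm
    (hmax.le_of_le_on_compl hU hG.isSubharmonic hG'.isSuperharmonic (fun y hy => (hb y hy).le) x)
    (hmax.le_of_le_on_compl hU hG'.isSubharmonic hG.isSuperharmonic (fun y hy => (hb y hy).ge) x)

theorem HasBarriers.exists_mem_upperClass (hbar : HasBarriers μ U) (hU : IsOpen U)
    (f : C(↥Uᶜ, ℝ)) {x₀ : ↥Uᶜ} {c : ℝ} (hc : f x₀ < c) :
    ∃ w ∈ upperClass μ U f, w x₀ = c := by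
  obtain ⟨h, hh₀, hneg, hsub⟩ := hbar x₀ x₀.2
  have hle : ∀ y, h y ≤ 0 := fun y => by
    rcases eq_or_ne y x₀ with rfl | hy
    exacts [hh₀.le, (hneg y hy).le]
  have : CompactSpace ↥Uᶜ := isCompact_iff_compactSpace.1 hU.isClosed_compl.isCompact
  -- On the part of `∂U` where `f ≥ c`, which avoids `x₀`, the barrier is bounded away from `0`.
  obtain ⟨C, hC, hfC⟩ := (isClosed_le continuous_const f.continuous).isCompact.exists_le_mul_of_pos
    (φ := fun y : ↥Uᶜ => f y - c) (ψ := fun y => -h y) (by fun_prop) (by fun_prop)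
    fun y (hy : c ≤ f y) => neg_pos.2 <| hneg y fun hyx => by
      rw [Subtype.ext hyx] at hy
      linarith
  refine ⟨⟨fun x => c - C * h x, by fun_prop⟩, ⟨hsub.isSuperharmonic_const_sub_mul c hC, ?_⟩,
    by simp [hh₀]⟩
  intro y
  show f y ≤ c - C * h y
  by_cases hy : c ≤ f y
  · linarith [hfC y hy]
  · nlinarith [hle y]

theorem HasBarriers.exists_subharmonic (hbar : HasBarriers μ U) (hU : IsOpen U)
    (f : C(↥Uᶜ, ℝ)) {x₀ : ↥Uᶜ} {c : ℝ} (hc : c < f x₀) :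
    ∃ u : C(K, ℝ), IsSubharmonic μ u ∧ (∀ y : ↥Uᶜ, u y ≤ f y) ∧ u x₀ = c := by
  obtain ⟨w, ⟨hw, hfw⟩, hwx₀⟩ := hbar.exists_mem_upperClass hU (-f) (c := -c) (by simpa using hc)
  exact ⟨-w, hw.neg, fun y => by simpa using neg_le.1 (hfw y), by simp [hwx₀]⟩

section Perron

variable {f : C(↥Uᶜ, ℝ)}

theorem HasStrongMaxPrinciple.le_of_mem_upperClass (hmax : HasStrongMaxPrinciple μ U)
    (hne : Uᶜ.Nonempty) {u : C(K, ℝ)} (hu : IsSubharmonic μ u) (huf : ∀ y : ↥Uᶜ, u y ≤ f y)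
    {w : C(K, ℝ)} (hw : w ∈ upperClass μ U f) (x : K) : u x ≤ w x :=
  hmax.le_of_le_on_compl hne hu hw.1 (fun y hy => (huf ⟨y, hy⟩).trans (hw.2 ⟨y, hy⟩)) x

theorem HasBarriers.upperClass_nonempty (hbar : HasBarriers μ U) (hU : IsOpen U)
    (hne : Uᶜ.Nonempty) (f : C(↥Uᶜ, ℝ)) : Nonempty (upperClass μ U f) :=
  let ⟨a, ha⟩ := hne
  let ⟨w, hw, _⟩ := hbar.exists_mem_upperClass hU f (x₀ := ⟨a, ha⟩) (lt_add_one _)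
  ⟨⟨w, hw⟩⟩

theorem HasBarriers.exists_subharmonic_le (hbar : HasBarriers μ U) (hU : IsOpen U)
    (hne : Uᶜ.Nonempty) (f : C(↥Uᶜ, ℝ)) :
    ∃ u : C(K, ℝ), IsSubharmonic μ u ∧ ∀ y : ↥Uᶜ, u y ≤ f y :=
  let ⟨a, ha⟩ := hne
  let ⟨u, hu, huf, _⟩ := hbar.exists_subharmonic hU f (x₀ := ⟨a, ha⟩) (sub_one_lt _)
  ⟨u, hu, huf⟩

theorem bddBelow_perron (hmax : HasStrongMaxPrinciple μ U) (hbar : HasBarriers μ U)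
    (hU : IsOpen U) (hne : Uᶜ.Nonempty) (x : K) :
    BddBelow (range fun w : upperClass μ U f => (w : C(K, ℝ)) x) := by
  obtain ⟨u, hu, huf⟩ := hbar.exists_subharmonic_le hU hne f
  exact ⟨u x, forall_mem_range.2 fun w => hmax.le_of_mem_upperClass hne hu huf w.2 x⟩

theorem perron_le (hmax : HasStrongMaxPrinciple μ U) (hbar : HasBarriers μ U)
    (hU : IsOpen U) (hne : Uᶜ.Nonempty) {w : C(K, ℝ)} (hw : w ∈ upperClass μ U f) (x : K) :
    perron μ U f x ≤ w x :=
  ciInf_le (bddBelow_perron hmax hbar hU hne x) ⟨w, hw⟩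

theorem le_perron (hmax : HasStrongMaxPrinciple μ U) (hbar : HasBarriers μ U)
    (hU : IsOpen U) (hne : Uᶜ.Nonempty) {u : C(K, ℝ)} (hu : IsSubharmonic μ u)
    (huf : ∀ y : ↥Uᶜ, u y ≤ f y) (x : K) : u x ≤ perron μ U f x :=
  have := hbar.upperClass_nonempty hU hne f
  le_ciInf fun w => hmax.le_of_mem_upperClass hne hu huf w.2 x

theorem perron_eq_on_compl (hmax : HasStrongMaxPrinciple μ U) (hbar : HasBarriers μ U)
    (hU : IsOpen U) (hne : Uᶜ.Nonempty) (y : ↥Uᶜ) : perron μ U f y = f y := by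
  have := hbar.upperClass_nonempty hU hne f
  refine le_antisymm (le_of_forall_gt_imp_ge_of_dense fun c hc => ?_) (le_ciInf fun w => w.2.2 y)
  obtain ⟨w, hw, rfl⟩ := hbar.exists_mem_upperClass hU f hc
  exact perron_le hmax hbar hU hne hw y

theorem measurable_perron (hmax : HasStrongMaxPrinciple μ U) (hbar : HasBarriers μ U)
    (hU : IsOpen U) (hne : Uᶜ.Nonempty) : Measurable (perron μ U f) :=
  (upperSemicontinuous_ciInf (bddBelow_perron hmax hbar hU hne)
    fun w => (w : C(K, ℝ)).continuous.upperSemicontinuous).measurable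

theorem exists_norm_perron_le (hmax : HasStrongMaxPrinciple μ U) (hbar : HasBarriers μ U)
    (hU : IsOpen U) (hne : Uᶜ.Nonempty) : ∃ C, ∀ x, ‖perron μ U f x‖ ≤ C := by
  obtain ⟨u, hu, huf⟩ := hbar.exists_subharmonic_le hU hne f
  obtain ⟨⟨w, hw⟩⟩ := hbar.upperClass_nonempty hU hne f
  refine ⟨‖u‖ + ‖w‖, fun x => ?_⟩
  have hux := neg_le_of_abs_le ((Real.norm_eq_abs _).symm.trans_le (u.norm_coe_le_norm x))
  have hwx := le_of_abs_le ((Real.norm_eq_abs _).symm.trans_le (w.norm_coe_le_norm x))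
  rw [Real.norm_eq_abs, abs_le]
  constructor <;> linarith [norm_nonneg u, norm_nonneg w, le_perron hmax hbar hU hne hu huf x,
    perron_le hmax hbar hU hne hw x]

theorem integrable_perron (hmax : HasStrongMaxPrinciple μ U) (hbar : HasBarriers μ U)
    (hU : IsOpen U) (hne : Uᶜ.Nonempty) (ν : Measure K) [IsFiniteMeasure ν] :
    Integrable (perron μ U f) ν :=
  let ⟨C, hC⟩ := exists_norm_perron_le hmax hbar hU hne
  .of_bound (measurable_perron hmax hbar hU hne).aestronglyMeasurable C (ae_of_all _ hC)

theorem isSuperharmonic_perron (hmax : HasStrongMaxPrinciple μ U) (hbar : HasBarriers μ U)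
    (hU : IsOpen U) (hne : Uᶜ.Nonempty) : IsSuperharmonic μ (perron μ U f) := fun x => by
  have := hbar.upperClass_nonempty hU hne f
  exact le_ciInf fun w => (integral_mono (integrable_perron hmax hbar hU hne _)
    (w.1.integrable _) (perron_le hmax hbar hU hne w.2)).trans (w.2.1 x)

theorem le_integral_perron (hmax : HasStrongMaxPrinciple μ U) (hbar : HasBarriers μ U)
    (hU : IsOpen U) (hne : Uᶜ.Nonempty) {u : C(K, ℝ)} (hu : IsSubharmonic μ u)
    (huf : ∀ y : ↥Uᶜ, u y ≤ f y) (x : K) : u x ≤ ∫ y, perron μ U f y ∂μ x :=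
  (hu x).trans <| integral_mono (u.integrable _) (integrable_perron hmax hbar hU hne _)
    (le_perron hmax hbar hU hne hu huf)

theorem integral_perron_eq_on_compl (hmax : HasStrongMaxPrinciple μ U) (hbar : HasBarriers μ U)
    (hU : IsOpen U) (hne : Uᶜ.Nonempty) (hμ : ∀ x ∉ U, μ x = Measure.dirac x) (y : ↥Uᶜ) :
    ∫ z, perron μ U f z ∂μ y = f y := by
  rw [hμ y y.2, integral_dirac' _ _ (measurable_perron hmax hbar hU hne).stronglyMeasurable,
    perron_eq_on_compl hmax hbar hU hne]

theorem continuousAt_integral_perron_of_notMem (hmax : HasStrongMaxPrinciple μ U)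
    (hbar : HasBarriers μ U) (hU : IsOpen U) (hne : Uᶜ.Nonempty)
    (hμ : ∀ x ∉ U, μ x = Measure.dirac x) {x₀ : K} (hx₀ : x₀ ∉ U) :
    ContinuousAt (fun x => ∫ y, perron μ U f y ∂μ x) x₀ := by
  have hfx₀ := integral_perron_eq_on_compl (f := f) hmax hbar hU hne hμ ⟨x₀, hx₀⟩
  refine continuousAt_of_squeeze (fun a ha => ?_) (fun b hb => ?_)
  · obtain ⟨c, hac, hc⟩ := exists_between (ha.trans_eq hfx₀)
    obtain ⟨u, hu, huf, rfl⟩ := hbar.exists_subharmonic hU f (x₀ := ⟨x₀, hx₀⟩) hc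
    exact ⟨u, u.continuous.continuousAt, le_integral_perron hmax hbar hU hne hu huf, hac⟩
  · obtain ⟨c, hc, hcb⟩ := exists_between (hfx₀.symm.trans_lt hb)
    obtain ⟨w, hw, rfl⟩ := hbar.exists_mem_upperClass hU f (x₀ := ⟨x₀, hx₀⟩) hc
    exact ⟨w, w.continuous.continuousAt, fun x =>
      (isSuperharmonic_perron hmax hbar hU hne x).trans (perron_le hmax hbar hU hne hw x), hcb⟩

theorem continuous_integral_perron (hmax : HasStrongMaxPrinciple μ U) (hbar : HasBarriers μ U)
    (hU : IsOpen U) (hne : Uᶜ.Nonempty) (hμ : ∀ x ∉ U, μ x = Measure.dirac x)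
    (hSF : IsStrongFellerOn μ U) : Continuous fun x => ∫ y, perron μ U f y ∂μ x :=
  continuous_iff_continuousAt.2 fun x => by
    by_cases hx : x ∈ U
    · exact (hSF _ (measurable_perron hmax hbar hU hne)
        (exists_norm_perron_le hmax hbar hU hne)).continuousAt (hU.mem_nhds hx)
    · exact continuousAt_integral_perron_of_notMem hmax hbar hU hne hμ hx

theorem exists_isHarmonic_eq_on_compl (hmax : HasStrongMaxPrinciple μ U) (hbar : HasBarriers μ U)
    (hU : IsOpen U) (hne : Uᶜ.Nonempty) (hμ : ∀ x ∉ U, μ x = Measure.dirac x)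
    (hSF : IsStrongFellerOn μ U) (f : C(↥Uᶜ, ℝ)) :
    ∃ G : C(K, ℝ), IsHarmonic μ G ∧ ∀ y : ↥Uᶜ, G y = f y := by
  set h : C(K, ℝ) := ⟨_, continuous_integral_perron (f := f) hmax hbar hU hne hμ hSF⟩
  have hh_compl : ∀ y : ↥Uᶜ, h y = f y := integral_perron_eq_on_compl hmax hbar hU hne hμ
  have hh_super : IsSuperharmonic μ h := fun x => integral_mono (h.integrable _)
    (integrable_perron hmax hbar hU hne _) (isSuperharmonic_perron hmax hbar hU hne)
  have hperron : perron μ U f = h := funext fun x => le_antisymm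
    (perron_le hmax hbar hU hne ⟨hh_super, fun y => (hh_compl y).ge⟩ x)
    (isSuperharmonic_perron hmax hbar hU hne x)
  refine ⟨h, fun x => ?_, hh_compl⟩
  change ∫ y, h y ∂μ x = ∫ y, perron μ U f y ∂μ x
  rw [hperron]

theorem isHarmonic_iff_re_im {G : C(K, ℂ)} :
    IsHarmonic μ G ↔ IsHarmonic μ (fun x => (G x).re) ∧ IsHarmonic μ (fun x => (G x).im) := by
  have hre x : ∫ y, (G y).re ∂μ x = (∫ y, G y ∂μ x).re := integral_re (G.integrable _)
  have him x : ∫ y, (G y).im ∂μ x = (∫ y, G y ∂μ x).im := integral_im (G.integrable _)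
  simp only [IsHarmonic, hre, him, ← forall_and, Complex.ext_iff]

theorem existsUnique_isHarmonic_eq_on_compl (hmax : HasStrongMaxPrinciple μ U)
    (hbar : HasBarriers μ U) (hU : IsOpen U) (hne : Uᶜ.Nonempty)
    (hμ : ∀ x ∉ U, μ x = Measure.dirac x) (hSF : IsStrongFellerOn μ U) (f : C(↥Uᶜ, ℂ)) :
    ∃! G : C(K, ℂ), IsHarmonic μ G ∧ ∀ y : ↥Uᶜ, G y = f y := by
  obtain ⟨R, hR, hR_compl⟩ :=
    exists_isHarmonic_eq_on_compl hmax hbar hU hne hμ hSF ⟨fun y => (f y).re, by fun_prop⟩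
  obtain ⟨I, hI, hI_compl⟩ :=
    exists_isHarmonic_eq_on_compl hmax hbar hU hne hμ hSF ⟨fun y => (f y).im, by fun_prop⟩
  refine ⟨⟨fun x => R x + I x * Complex.I, by fun_prop⟩,
    ⟨isHarmonic_iff_re_im.2 ⟨by simpa using hR, by simpa using hI⟩,
      fun y => Complex.ext (by simpa using hR_compl y) (by simpa using hI_compl y)⟩, ?_⟩
  rintro G ⟨hG, hG_compl⟩
  obtain ⟨hGR, hGI⟩ := isHarmonic_iff_re_im.1 hG
  have hGR_eq := hmax.eq_of_eq_on_compl hne (G := ⟨fun x => (G x).re, by fun_prop⟩) hGR hR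
    fun y hy => by simpa [hG_compl ⟨y, hy⟩] using (hR_compl ⟨y, hy⟩).symm
  have hGI_eq := hmax.eq_of_eq_on_compl hne (G := ⟨fun x => (G x).im, by fun_prop⟩) hGI hI
    fun y hy => by simpa [hG_compl ⟨y, hy⟩] using (hI_compl ⟨y, hy⟩).symm
  refine ContinuousMap.ext fun x => Complex.ext ?_ ?_
  · simpa using DFunLike.congr_fun hGR_eq x
  · simpa using DFunLike.congr_fun hGI_eq x

end Perron

end Harmonic

section MarkovOperator

variable {K : Type*} [MeasurableSpace K] {U : Set K}
  {Φ : (↥U → ℂ) → (↥U → ℂ)}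

open Classical in
noncomputable def IsMarkovOperator.kernel (hM : IsMarkovOperator Φ) (x : K) : Measure K :=
  if hx : x ∈ U then (hM ⟨x, hx⟩).choose.map (↑) else Measure.dirac x

theorem IsMarkovOperator.isProbabilityMeasure_kernel (hM : IsMarkovOperator Φ) (x : K) :
    IsProbabilityMeasure (hM.kernel x) := by
  rw [kernel]
  split_ifs with hx
  · have := (hM ⟨x, hx⟩).choose_spec.1
    exact Measure.isProbabilityMeasure_map measurable_subtype_coe.aemeasurable
  · infer_instance

theorem IsMarkovOperator.kernel_of_notMem (hM : IsMarkovOperator Φ) {x : K} (hx : x ∉ U) :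
    hM.kernel x = Measure.dirac x :=
  dif_neg hx

theorem IsMarkovOperator.apply_eq_integral_kernel (hM : IsMarkovOperator Φ)
    (hU : MeasurableSet U) {g : K → ℂ} (hg : Measurable g) (hb : ∃ C, ∀ x, ‖g x‖ ≤ C) (u : ↥U) :
    Φ (fun v => g v) u = ∫ x, g x ∂hM.kernel u := by
  obtain ⟨C, hC⟩ := hb
  rw [kernel, dif_pos u.2, (MeasurableEmbedding.subtype_coe hU).integral_map]
  exact (hM u).choose_spec.2 _ (hg.comp measurable_subtype_coe) ⟨C, fun v => hC v⟩

theorem IsMarkovOperator.apply_ofReal_eq_integral_kernel (hM : IsMarkovOperator Φ)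
    (hU : MeasurableSet U) {g : K → ℝ} (hg : Measurable g) (hb : ∃ C, ∀ x, ‖g x‖ ≤ C)
    (u : ↥U) : Φ (fun v => (g v : ℂ)) u = ↑(∫ x, g x ∂hM.kernel u) := by
  rw [hM.apply_eq_integral_kernel hU (by fun_prop)
    (hb.imp fun C hC x => (Complex.norm_real _).trans_le (hC x))]
  exact integral_ofReal

theorem IsMarkovOperator.integral_kernel_of_notMem [MeasurableSingletonClass K]
    (hM : IsMarkovOperator Φ) {x : K} (hx : x ∉ U) {E : Type*} [NormedAddCommGroup E]
    [NormedSpace ℝ E] [CompleteSpace E] (g : K → E) : ∫ y, g y ∂hM.kernel x = g x := by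
  rw [hM.kernel_of_notMem hx, integral_dirac]

variable [TopologicalSpace K]

theorem HasStrongFeller.isStrongFellerOn_kernel (hSF : HasStrongFeller Φ)
    (hM : IsMarkovOperator Φ) (hU : MeasurableSet U) : IsStrongFellerOn hM.kernel U := by
  intro g hg hb
  have hΦ := hSF (fun v => (g v : ℂ))
    (Complex.measurable_ofReal.comp (hg.comp measurable_subtype_coe))
    (hb.imp fun C hC v => (Complex.norm_real _).trans_le (hC v))
  exact continuousOn_iff_continuous_domRestrict.2 <| (Complex.continuous_re.comp hΦ).congr
    fun u => (congrArg Complex.re (hM.apply_ofReal_eq_integral_kernel hU hg hb u)).trans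
      (Complex.ofReal_re _)

variable [CompactSpace K] [OpensMeasurableSpace K]

theorem CondB.hasStrongMaxPrinciple (hB : CondB U Φ) (hM : IsMarkovOperator Φ)
    (hU : MeasurableSet U) : HasStrongMaxPrinciple hM.kernel U := by
  intro g hg z hz hmax x
  have hΦ := hM.apply_ofReal_eq_integral_kernel hU g.continuous.measurable
    ⟨‖g‖, g.norm_coe_le_norm⟩
  have := hB ⟨fun x => (g x : ℂ), by fun_prop⟩ (fun x => Complex.ofReal_im _)
    (fun u => by simpa [hΦ u] using hg u) ⟨z, hz, fun x => Complex.real_le_real.2 (hmax x)⟩ x z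
  simpa using this

theorem IsMarkovOperator.forall_apply_eq_iff_isHarmonic [MeasurableSingletonClass K]
    (hM : IsMarkovOperator Φ) (hU : MeasurableSet U) {G : C(K, ℂ)} :
    (∀ u : ↥U, Φ (fun v => G v) u = G u) ↔ IsHarmonic hM.kernel G := by
  have hΦ := hM.apply_eq_integral_kernel hU G.continuous.measurable ⟨‖G‖, G.norm_coe_le_norm⟩
  refine ⟨fun hG x => ?_, fun hG u => (hΦ u).trans (hG u)⟩
  by_cases hx : x ∈ U
  · exact (hΦ ⟨x, hx⟩).symm.trans (hG ⟨x, hx⟩)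
  · exact hM.integral_kernel_of_notMem hx G

theorem CondA.hasBarriers [MeasurableSingletonClass K] (hA : CondA U Φ) (hM : IsMarkovOperator Φ)
    (hU : MeasurableSet U) : HasBarriers hM.kernel U := by
  intro x₀ hx₀
  obtain ⟨h, hh₀, hneg, hsub⟩ := hA x₀ hx₀
  have him : ∀ y, (h y).im = 0 := fun y => by
    rcases eq_or_ne y x₀ with rfl | hy
    exacts [by simp [hh₀], (Complex.lt_def.1 (hneg y hy)).2]
  have hreal : (fun v : ↥U => h v) = fun v : ↥U => ((h v).re : ℂ) :=
    funext fun v => Complex.ext rfl (by simp [him])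
  have hΦ := hM.apply_ofReal_eq_integral_kernel hU (g := fun y => (h y).re)
    (by fun_prop) ⟨‖h‖, fun y => (Complex.abs_re_le_norm _).trans (h.norm_coe_le_norm y)⟩
  refine ⟨⟨fun y => (h y).re, by fun_prop⟩, by simp [hh₀],
    fun y hy => by simpa using (Complex.lt_def.1 (hneg y hy)).1, fun x => ?_⟩
  by_cases hx : x ∈ U
  · have := hsub ⟨x, hx⟩
    rw [hreal, hΦ] at this
    simpa using (Complex.le_def.1 this).1
  · exact (hM.integral_kernel_of_notMem hx fun y => (h y).re).ge

end MarkovOperator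

theorem stmt0_general {K : Type*} [MetricSpace K] [CompactSpace K]
    [MeasurableSpace K] [BorelSpace K]
    (U : Set K) (hUopen : IsOpen U)
    (hbd : ∃ a b : K, a ∈ Uᶜ ∧ b ∈ Uᶜ ∧ a ≠ b)
    (Φ : (↥U → ℂ) → (↥U → ℂ))
    (hM : IsMarkovOperator Φ) (hSF : HasStrongFeller Φ)
    (hA : CondA U Φ) (hB : CondB U Φ)
    (f : C(↥(Uᶜ), ℂ)) :
    ∃! G : C(K, ℂ),
      (∀ u : ↥U, Φ (fun v : ↥U => G v.1) u = G u.1) ∧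
      (∀ x : ↥(Uᶜ), G x.1 = f x) := by
  obtain ⟨a, -, ha, -⟩ := hbd
  have hU := hUopen.measurableSet
  have := hM.isProbabilityMeasure_kernel
  simpa only [hM.forall_apply_eq_iff_isHarmonic hU] using
    existsUnique_isHarmonic_eq_on_compl (hB.hasStrongMaxPrinciple hM hU) (hA.hasBarriers hM hU)
      hUopen ⟨a, ha⟩ (fun _ => hM.kernel_of_notMem) (hSF.isStrongFellerOn_kernel hM hU) f

/-- For each `f ∈ C(∂U)` there exists a unique `G ∈ C(K)` with
`Φ (G_U) = G_U` on `U` and `G = f` on `∂U`. -/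
theorem stmt0 {K : Type*} [MetricSpace K] [CompactSpace K]
    [MeasurableSpace K] [BorelSpace K]
    (U : Set K) (hUopen : IsOpen U) (hUdense : Dense U)
    (hbd : ∃ a b : K, a ∈ Uᶜ ∧ b ∈ Uᶜ ∧ a ≠ b)
    (Φ : (↥U → ℂ) → (↥U → ℂ))
    (hM : IsMarkovOperator Φ) (hSF : HasStrongFeller Φ)
    (hA : CondA U Φ) (hB : CondB U Φ)
    (f : C(↥(Uᶜ), ℂ)) :
    ∃! G : C(K, ℂ),
      (∀ u : ↥U, Φ (fun v : ↥U => G v.1) u = G u.1) ∧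
      (∀ x : ↥(Uᶜ), G x.1 = f x) :=
  stmt0_general U hUopen hbd Φ hM hSF hA hB f
end

section
/- For each f ∈ C(K) and each x ∈ ∂U one has lim_{y→x, y∈U} sup_{n≥1} |Φ^n(f_U)(y) − f(x)| = 0. -/
open MeasureTheory Filter Topology ComplexOrder

/-- For each `f ∈ C(K)` and `x ∈ ∂U`,
`lim_{y→x, y∈U} sup_{n≥1} |Φⁿ(f_U)(y) − f(x)| = 0`. -/
theorem stmt4 {K : Type*} [MetricSpace K] [CompactSpace K]
    [MeasurableSpace K] [BorelSpace K]
    (U : Set K) (hUopen : IsOpen U) (hUdense : Dense U)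
    (hbd : ∃ a b : K, a ∈ Uᶜ ∧ b ∈ Uᶜ ∧ a ≠ b)
    (Φ : (↥U → ℂ) → (↥U → ℂ))
    (hM : IsMarkovOperator Φ) (hSF : HasStrongFeller Φ)
    (hA : CondA U Φ)
    (f : C(K, ℂ)) (x : K) (hx : x ∈ Uᶜ) :
    ∀ ε > (0 : ℝ), ∃ δ > (0 : ℝ), ∀ y : ↥U, dist y.1 x < δ →
      ∀ n : ℕ, 1 ≤ n → ‖Φ^[n] (fun v : ↥U => f v.1) y - f x‖ ≤ ε := by
  intro ε hε
  obtain ⟨h, hhx, hhneg, hhΦ⟩ := hA x hx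
  set φr : K → ℝ := fun v => (h v).re with hφr_def
  have hφr_cont : Continuous φr := Complex.continuous_re.comp h.continuous
  have hφr_x : φr x = 0 := by simp [φr, hhx]
  have hφr_neg : ∀ v : K, v ≠ x → φr v < 0 := fun v hv =>
    (Complex.lt_def.mp (hhneg v hv)).1
  have hφr_le : ∀ v : K, φr v ≤ 0 := by
    intro v
    by_cases hv : v = x
    · rw [hv, hφr_x]
    · exact (hφr_neg v hv).le
  set Mf : ℝ := ‖f‖ with hMf_def
  have hMf : ∀ v : K, ‖f v‖ ≤ Mf := fun v => f.norm_coe_le_norm v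
  have hMf0 : 0 ≤ Mf := norm_nonneg f
  -- continuity of f at x
  obtain ⟨δ₀, hδ₀, hδ₀f⟩ := Metric.continuousAt_iff.mp f.continuous.continuousAt
    (ε/2) (by positivity)
  -- the constant c
  obtain ⟨c, hc0, hcb⟩ : ∃ c : ℝ, 0 ≤ c ∧ ∀ v : K, ‖f v - f x‖ ≤ ε/2 - c * φr v := by
    by_cases hS : ∃ v : K, δ₀ ≤ dist v x
    · have hScl : IsClosed {v : K | δ₀ ≤ dist v x} :=
        isClosed_le continuous_const (continuous_id.dist continuous_const)
      obtain ⟨v₀, hv₀S, hv₀max⟩ := hScl.isCompact.exists_isMaxOn hS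
        (hφr_cont.continuousOn)
      have hv₀x : v₀ ≠ x := by
        intro hvx
        rw [hvx] at hv₀S
        simp only [Set.mem_setOf_eq, dist_self] at hv₀S
        linarith
      have hm : 0 < -φr v₀ := by linarith [hφr_neg v₀ hv₀x]
      refine ⟨(2 * Mf) / (-φr v₀), by positivity, ?_⟩
      intro v
      by_cases hv : dist v x < δ₀
      · have h1 : ‖f v - f x‖ < ε / 2 := by
          have := hδ₀f hv
          rwa [dist_eq_norm] at this
        nlinarith [hφr_le v, mul_nonneg (by positivity : (0:ℝ) ≤ (2 * Mf) / (-φr v₀))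
          (by linarith [hφr_le v] : 0 ≤ -φr v)]
      · have hvS : v ∈ {v : K | δ₀ ≤ dist v x} := not_lt.mp hv
        have h2 : φr v ≤ φr v₀ := hv₀max hvS
        have h3 : ‖f v - f x‖ ≤ 2 * Mf := by
          calc ‖f v - f x‖ ≤ ‖f v‖ + ‖f x‖ := norm_sub_le _ _
          _ ≤ 2 * Mf := by linarith [hMf v, hMf x]
        have h4 : (2 * Mf) / (-φr v₀) * (-φr v₀) = 2 * Mf :=
          div_mul_cancel₀ _ (ne_of_gt hm)
        nlinarith [mul_le_mul_of_nonneg_left (by linarith : -φr v₀ ≤ -φr v)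
          (by positivity : (0:ℝ) ≤ (2 * Mf) / (-φr v₀))]
    · push_neg at hS
      refine ⟨0, le_refl _, fun v => ?_⟩
      have := hδ₀f (hS v)
      rw [dist_eq_norm] at this
      linarith
  -- basic data
  set fU : ↥U → ℂ := fun v : ↥U => f v.1 with hfU_def
  have hfU_meas : Measurable fU := (f.continuous.comp continuous_subtype_val).measurable
  set hU : ↥U → ℂ := fun v : ↥U => h v.1 with hhU_def
  have hhU_meas : Measurable hU := (h.continuous.comp continuous_subtype_val).measurable
  have hhU_bdd : ∃ C : ℝ, ∀ v : ↥U, ‖hU v‖ ≤ C := ⟨‖h‖, fun v => h.norm_coe_le_norm v.1⟩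
  -- the one-step estimate
  have step : ∀ g : ↥U → ℂ, Measurable g → (∀ v, ‖g v‖ ≤ Mf) →
      (∀ v : ↥U, ‖g v - f x‖ ≤ ε/2 - c * φr v.1) →
      Measurable (Φ g) ∧ (∀ v, ‖Φ g v‖ ≤ Mf) ∧
        ∀ y : ↥U, ‖Φ g y - f x‖ ≤ ε/2 - c * φr y.1 := by
    intro g hgm hgb hge
    have hgbd : ∃ C : ℝ, ∀ v, ‖g v‖ ≤ C := ⟨Mf, hgb⟩
    refine ⟨(hSF g hgm hgbd).measurable, ?_, ?_⟩
    · intro y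
      obtain ⟨P, hP, hPeq⟩ := hM y
      haveI := hP
      rw [hPeq g hgm hgbd]
      calc ‖∫ v, g v ∂P‖ ≤ Mf * (P Set.univ).toReal :=
            norm_integral_le_of_norm_le_const (ae_of_all _ hgb)
        _ = Mf := by simp
    · intro y
      obtain ⟨P, hP, hPeq⟩ := hM y
      haveI := hP
      have hgint : Integrable g P :=
        ⟨hgm.aestronglyMeasurable, HasFiniteIntegral.of_bounded (ae_of_all _ hgb)⟩
      have hhUint : Integrable hU P :=
        ⟨hhU_meas.aestronglyMeasurable, HasFiniteIntegral.of_bounded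
          (C := ‖h‖) (ae_of_all _ (fun v => h.norm_coe_le_norm v.1))⟩
      have hφint : Integrable (fun v : ↥U => φr v.1) P :=
        ⟨((hφr_cont.comp continuous_subtype_val).measurable).aestronglyMeasurable,
          HasFiniteIntegral.of_bounded (C := ‖h‖) (ae_of_all _ (fun v => by
            simp only [Real.norm_eq_abs]
            exact (Complex.abs_re_le_norm (h v.1)).trans (h.norm_coe_le_norm v.1)))⟩
      -- Φ h ≥ h gives ∫ φr ≥ φr y
      have hre : φr y.1 ≤ ∫ v, φr v.1 ∂P := by
        have h1 : h y.1 ≤ Φ hU y := hhΦ y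
        have h2 : Φ hU y = ∫ v, hU v ∂P := hPeq hU hhU_meas hhU_bdd
        have h3 : ∫ v, φr v.1 ∂P = (∫ v, hU v ∂P).re := by
          have := (Complex.reCLM).integral_comp_comm hhUint
          simpa using this
        rw [h3, ← h2]
        exact (Complex.le_def.mp h1).1
      -- main chain
      have hdiff : Φ g y - f x = ∫ v, (g v - f x) ∂P := by
        rw [hPeq g hgm hgbd, integral_sub hgint (integrable_const _), integral_const]
        simp
      rw [hdiff]
      have hnormint : Integrable (fun v : ↥U => ‖g v - f x‖) P :=
        (hgint.sub (integrable_const _)).norm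
      have hrhsint : Integrable (fun v : ↥U => ε/2 - c * φr v.1) P :=
        (integrable_const _).sub (hφint.const_mul c)
      calc ‖∫ v, (g v - f x) ∂P‖ ≤ ∫ v, ‖g v - f x‖ ∂P :=
            norm_integral_le_integral_norm _
        _ ≤ ∫ v, (ε/2 - c * φr v.1) ∂P :=
            integral_mono hnormint hrhsint (fun v => hge v)
        _ = ε/2 - c * ∫ v, φr v.1 ∂P := by
            rw [integral_sub (integrable_const _) (hφint.const_mul c), integral_const,
              integral_const_mul]
            simp
        _ ≤ ε/2 - c * φr y.1 := by nlinarith [mul_le_mul_of_nonneg_left hre hc0]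
  -- induction
  have main : ∀ n : ℕ, Measurable (Φ^[n] fU) ∧ (∀ v, ‖Φ^[n] fU v‖ ≤ Mf) ∧
      ∀ y : ↥U, ‖Φ^[n] fU y - f x‖ ≤ ε/2 - c * φr y.1 := by
    intro n
    induction n with
    | zero =>
      refine ⟨hfU_meas, fun v => hMf v.1, fun y => hcb y.1⟩
    | succ n ih =>
      rw [Function.iterate_succ_apply']
      exact step _ ih.1 ih.2.1 ih.2.2
  -- choose δ
  obtain ⟨δ, hδ, hδφ⟩ := Metric.continuousAt_iff.mp hφr_cont.continuousAt
    (ε/(2*(c+1))) (by positivity)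
  refine ⟨δ, hδ, fun y hy n hn => ?_⟩
  have h1 := (main n).2.2 y
  have h2 : dist (φr y.1) (φr x) < ε/(2*(c+1)) := hδφ hy
  rw [hφr_x, Real.dist_eq, sub_zero] at h2
  have h3 : -φr y.1 ≤ |φr y.1| := neg_le_abs _
  have h4 : c * (ε/(2*(c+1))) ≤ ε/2 := by
    rw [← mul_div_assoc, div_le_div_iff₀ (by positivity) (by norm_num : (0:ℝ) < 2)]
    nlinarith
  have h5 : c * (-φr y.1) ≤ ε/2 := by
    calc c * (-φr y.1) ≤ c * |φr y.1| := mul_le_mul_of_nonneg_left h3 hc0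
      _ ≤ c * (ε/(2*(c+1))) := mul_le_mul_of_nonneg_left h2.le hc0
      _ ≤ ε/2 := h4
  linarith
end

section
/- For each f ∈ C(K), the function Ψ(f) on K defined by Ψ(f)(x) = Φ(f_U)(x) for x ∈ U and Ψ(f)(x) = f(x) for x ∈ ∂U is continuous on K. -/
/-!
Inside `U`, `Ψ f = Φ (f_U)` is continuous by the strong Feller property. At a boundary point `x`,
let `P_y` represent `Φ` at `y ∈ U` and let `h` be the barrier of (A). If `V` is a neighbourhood of
`x` and `-re h ≥ c > 0` off `V`, Markov's inequality and `∫ h dP_y = Φ (h_U) y ≥ h y` give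
`c · P_y (K \ V) ≤ -re h y`, which tends to `-re h x = 0` as `y → x`. So the `P_y` concentrate
near `x`, and `Ψ f y = ∫ f dP_y` tends to `f x = Ψ f x`.
-/

open MeasureTheory Filter Topology ComplexOrder

section Integral

variable {α E : Type*} [MeasurableSpace α] {P : Measure α} [IsProbabilityMeasure P]
  [NormedAddCommGroup E] [NormedSpace ℝ E] [CompleteSpace E]

lemma norm_integral_sub_le_add_mul_measureReal {g : α → E} (hg : Integrable g P) (a : E)
    {S : Set α} (hS : MeasurableSet S) {η D : ℝ} (hη : 0 ≤ η)
    (hoff : ∀ v ∉ S, ‖g v - a‖ ≤ η) (hD : ∀ v, ‖g v - a‖ ≤ D) :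
    ‖∫ v, g v ∂P - a‖ ≤ η + D * P.real S := by
  have hbound : ∀ v, ‖g v - a‖ ≤ η + S.indicator (fun _ => D) v := by
    intro v
    by_cases hv : v ∈ S
    · rw [Set.indicator_of_mem hv]; linarith [hD v]
    · rw [Set.indicator_of_notMem hv, add_zero]; exact hoff v hv
  have hint : Integrable (fun v => η + S.indicator (fun _ => D) v) P :=
    (integrable_const η).add ((integrable_const D).indicator hS)
  calc ‖∫ v, g v ∂P - a‖ = ‖∫ v, (g v - a) ∂P‖ := by
        rw [integral_sub hg (integrable_const a), integral_const, probReal_univ, one_smul]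
    _ ≤ ∫ v, (η + S.indicator (fun _ => D) v) ∂P :=
        norm_integral_le_of_norm_le hint (ae_of_all _ hbound)
    _ = η + D * P.real S := by
        rw [integral_add (integrable_const η) ((integrable_const D).indicator hS),
          integral_const, integral_indicator_const D hS, probReal_univ, one_smul, smul_eq_mul,
          mul_comm]

end Integral

section PsiFun

variable {K : Type*} {U : Set K} {Φ : (U → ℂ) → (U → ℂ)}

lemma psiFun_of_mem (f : K → ℂ) {x : K} (hx : x ∈ U) :
    psiFun U Φ f x = Φ (fun v : U => f v) ⟨x, hx⟩ :=
  dif_pos hx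

lemma psiFun_of_notMem (f : K → ℂ) {x : K} (hx : x ∉ U) : psiFun U Φ f x = f x :=
  dif_neg hx

end PsiFun

section Markov

variable {K : Type*} [TopologicalSpace K] [CompactSpace K] [MeasurableSpace K]
  [OpensMeasurableSpace K] {U : Set K} {Φ : (U → ℂ) → (U → ℂ)}

lemma ContinuousMap.integrable_comp_subtypeVal (f : C(K, ℂ)) (P : Measure U)
    [IsFiniteMeasure P] : Integrable (fun v : U => f v) P :=
  .of_bound (f.continuous.comp continuous_subtype_val).aestronglyMeasurable ‖f‖
    (ae_of_all _ fun v => f.norm_coe_le_norm v)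

lemma IsMarkovOperator.exists_integral_eq (hM : IsMarkovOperator Φ) (u : U) :
    ∃ P : Measure U, IsProbabilityMeasure P ∧
      ∀ f : C(K, ℂ), Φ (fun v : U => f v) u = ∫ v, f v ∂P := by
  obtain ⟨P, hP, hrep⟩ := hM u
  exact ⟨P, hP, fun f => hrep _ (f.continuous.comp continuous_subtype_val).measurable
    ⟨‖f‖, fun v => f.norm_coe_le_norm v⟩⟩

lemma continuousAt_psiFun_of_mem (hU : IsOpen U) (hSF : HasStrongFeller Φ) (f : C(K, ℂ))
    {x : K} (hx : x ∈ U) : ContinuousAt (psiFun U Φ f) x := by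
  have hrestrict : U.domRestrict (psiFun U Φ f) = Φ (fun v : U => f v) :=
    funext fun u => psiFun_of_mem f u.2
  have hcont : ContinuousOn (psiFun U Φ f) U := by
    rw [continuousOn_iff_continuous_domRestrict, hrestrict]
    exact hSF _ (f.continuous.comp continuous_subtype_val).measurable
      ⟨‖f‖, fun v => f.norm_coe_le_norm v⟩
  exact hcont.continuousAt (hU.mem_nhds hx)

lemma IsMarkovOperator.norm_sub_le_of_barrier (hM : IsMarkovOperator Φ) (f : C(K, ℂ))
    {h : C(K, ℂ)} (hre : ∀ z, (h z).re ≤ 0) {S : Set K} (hS : MeasurableSet S) {c : ℝ} (hc : 0 < c)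
    (hcS : ∀ z ∈ S, c ≤ -(h z).re) {x : K} {η : ℝ} (hη : 0 ≤ η)
    (hfS : ∀ z ∉ S, ‖f z - f x‖ ≤ η) (u : U) (hu : h u ≤ Φ (fun v : U => h v) u) :
    ‖Φ (fun v : U => f v) u - f x‖ ≤ η + 2 * ‖f‖ * (-(h u).re / c) := by
  obtain ⟨P, hP, hrep⟩ := hM.exists_integral_eq u
  set S' : Set U := Subtype.val ⁻¹' S
  have hint := h.integrable_comp_subtypeVal P
  have hmass : c * P.real S' ≤ -(h u).re :=
    calc c * P.real S' ≤ c * P.real {v | c ≤ -(h v).re} :=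
          mul_le_mul_of_nonneg_left (measureReal_mono fun v hv => hcS v hv) hc.le
      _ ≤ ∫ v, -(h v).re ∂P :=
          mul_meas_ge_le_integral_of_nonneg (μ := P) (ae_of_all _ fun v => neg_nonneg.2 (hre v))
            hint.re.neg c
      _ = -(Φ (fun v : U => h v) u).re := by
          rw [hrep h, integral_neg]; exact congrArg Neg.neg (integral_re hint)
      _ ≤ -(h u).re := neg_le_neg (Complex.le_def.1 hu).1
  have hfD : ∀ v : U, ‖f v - f x‖ ≤ 2 * ‖f‖ := fun v =>
    (norm_sub_le _ _).trans (by linarith [f.norm_coe_le_norm v, f.norm_coe_le_norm x])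
  rw [hrep f]
  calc ‖∫ v, f v ∂P - f x‖ ≤ η + 2 * ‖f‖ * P.real S' :=
        norm_integral_sub_le_add_mul_measureReal (f.integrable_comp_subtypeVal P) (f x)
          (hS.preimage measurable_subtype_coe) hη (fun v hv => hfS v hv) hfD
    _ ≤ η + 2 * ‖f‖ * (-(h u).re / c) := by
        gcongr
        rwa [le_div_iff₀ hc, mul_comm]

lemma continuousAt_psiFun_of_barrier (hM : IsMarkovOperator Φ) (f : C(K, ℂ)) {x : K}
    (hx : x ∉ U) {h : C(K, ℂ)} (hx0 : h x = 0) (hneg : ∀ y, y ≠ x → h y < 0)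
    (hsub : ∀ u : U, h u ≤ Φ (fun v : U => h v) u) : ContinuousAt (psiFun U Φ f) x := by
  have hre : ∀ z, (h z).re ≤ 0 := fun z => by
    rcases eq_or_ne z x with rfl | hz
    · simp [hx0]
    · exact (Complex.lt_def.1 (hneg z hz)).1.le
  rw [ContinuousAt, psiFun_of_notMem f hx, Metric.tendsto_nhds]
  intro ε hε
  set V := {z | dist (f z) (f x) < ε / 2}
  have hV : IsOpen V := isOpen_lt (by fun_prop) continuous_const
  have hxV : x ∈ V := by simpa [V] using hε
  obtain ⟨c, hc, hcS⟩ := hV.isClosed_compl.isCompact.exists_forall_le'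
    (Complex.continuous_re.comp h.continuous).neg.continuousOn (a := 0)
    fun z hz => neg_pos.2 (Complex.lt_def.1 (hneg z (ne_of_mem_of_not_mem hxV hz).symm)).1
  have hlim : Tendsto (fun y => ε / 2 + 2 * ‖f‖ * (-(h y).re / c)) (𝓝 x) (𝓝 (ε / 2)) := by
    simpa [hx0] using ((Complex.continuous_re.comp h.continuous).tendsto x).neg.div_const c
      |>.const_mul (2 * ‖f‖) |>.const_add (ε / 2)
  filter_upwards [hV.mem_nhds hxV, hlim.eventually (gt_mem_nhds (half_lt_self hε))]
    with y hyV hy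
  by_cases hyU : y ∈ U
  · rw [psiFun_of_mem f hyU, dist_eq_norm]
    refine (hM.norm_sub_le_of_barrier f hre hV.measurableSet.compl hc hcS (half_pos hε).le
      (fun z hz => ?_) ⟨y, hyU⟩ (hsub _)).trans_lt hy
    rw [← dist_eq_norm]
    exact (not_not.1 hz).le
  · rw [psiFun_of_notMem f hyU]
    exact lt_trans hyV (half_lt_self hε)

end Markov

theorem stmt5_general {K : Type*} [MetricSpace K] [CompactSpace K]
    [MeasurableSpace K] [BorelSpace K]
    (U : Set K) (hUopen : IsOpen U)
    (Φ : (↥U → ℂ) → (↥U → ℂ))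
    (hM : IsMarkovOperator Φ) (hSF : HasStrongFeller Φ)
    (hA : CondA U Φ)
    (f : C(K, ℂ)) :
    Continuous (psiFun U Φ ⇑f) := by
  refine continuous_iff_continuousAt.2 fun x => ?_
  by_cases hx : x ∈ U
  · exact continuousAt_psiFun_of_mem hUopen hSF f hx
  · obtain ⟨h, hx0, hneg, hsub⟩ := hA x hx
    exact continuousAt_psiFun_of_barrier hM f hx hx0 hneg hsub

/-- For each `f ∈ C(K)` the function `Ψ f`, equal to `Φ (f_U)`
on `U` and to `f` on `∂U`, is continuous on `K`. -/
theorem stmt5 {K : Type*} [MetricSpace K] [CompactSpace K]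
    [MeasurableSpace K] [BorelSpace K]
    (U : Set K) (hUopen : IsOpen U) (hUdense : Dense U)
    (hbd : ∃ a b : K, a ∈ Uᶜ ∧ b ∈ Uᶜ ∧ a ≠ b)
    (Φ : (↥U → ℂ) → (↥U → ℂ))
    (hM : IsMarkovOperator Φ) (hSF : HasStrongFeller Φ)
    (hA : CondA U Φ)
    (f : C(K, ℂ)) :
    Continuous (psiFun U Φ ⇑f) :=
  stmt5_general U hUopen Φ hM hSF hA f
end

section
/- If f ∈ C(K) is real-valued and Φ(f_U) ≥ f_U on U, then the sequence {Ψ^n(f)}_{n≥1} is monotone increasing and converges uniformly on K to a function g ∈ C(K) which satisfies Φ(g_U) = g_U on U and g(x) = f(x) for all x ∈ ∂U. -/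
/-!
Everything happens on real-valued functions, where `Φ` acts as integration against the
probability measures `P_x`: it is monotone and commutes with affine maps `a + b • ·`. So `Ψ` keeps a
function below any supersolution above it and above any subsolution below it. At a boundary point
`x`, the barrier `h` of condition (A) yields the supersolution `f x + ε - t h` above `f` and the
subsolution `f x - ε + t h` below it, for `t` large; squeezed between them, `Ψ f` is continuous at
`x`, while on `U` it is continuous by the strong Feller property. Since `f` is a subsolution, the
iterates `Ψⁿ f` increase and stay below `max f`; their pointwise limit `g` is a fixed point of `Φ`
by dominated convergence, continuous by the same two arguments, and Dini's theorem makes the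
convergence uniform.
-/

open MeasureTheory Filter Topology ComplexOrder

noncomputable def reOp {α : Type*} (Φ : (α → ℂ) → (α → ℂ)) (u : α → ℝ) : α → ℝ :=
  fun x => (Φ (fun y => (u y : ℂ)) x).re

def IsBoundedMeasurable {α : Type*} [MeasurableSpace α] (u : α → ℝ) : Prop :=
  Measurable u ∧ ∃ C, ∀ y, |u y| ≤ C

section BoundedMeasurable

variable {α : Type*} [MeasurableSpace α] {u v : α → ℝ}

theorem IsBoundedMeasurable.integrable (hu : IsBoundedMeasurable u) (P : Measure α)
    [IsFiniteMeasure P] : Integrable u P :=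
  let ⟨hm, C, hC⟩ := hu
  Integrable.of_bound hm.aestronglyMeasurable C (ae_of_all _ hC)

theorem IsBoundedMeasurable.const_add_mul (hu : IsBoundedMeasurable u) (a b : ℝ) :
    IsBoundedMeasurable fun y => a + b * u y := by
  obtain ⟨hm, C, hC⟩ := hu
  refine ⟨by fun_prop, |a| + |b| * C, fun y => ?_⟩
  calc |a + b * u y| ≤ |a| + |b| * |u y| := by rw [← abs_mul]; exact abs_add_le _ _
    _ ≤ |a| + |b| * C := by gcongr; exact hC y

theorem IsBoundedMeasurable.restrict (hu : IsBoundedMeasurable u) (s : Set α) :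
    IsBoundedMeasurable fun y : s => u y :=
  let ⟨hm, C, hC⟩ := hu
  ⟨hm.comp measurable_subtype_coe, C, fun y => hC y⟩

theorem Continuous.isBoundedMeasurable [TopologicalSpace α] [CompactSpace α]
    [OpensMeasurableSpace α] (hu : Continuous u) : IsBoundedMeasurable u := by
  obtain ⟨C, hC⟩ := isCompact_univ.exists_bound_of_continuousOn hu.continuousOn
  exact ⟨hu.measurable, C, fun y => hC y trivial⟩

theorem isBoundedMeasurable_of_tendsto {u : ℕ → α → ℝ} (hu : ∀ n, Measurable (u n)) {C : ℝ}
    (hC : ∀ n y, |u n y| ≤ C) (hlim : ∀ y, Tendsto (fun n => u n y) atTop (𝓝 (v y))) :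
    IsBoundedMeasurable v :=
  ⟨measurable_of_tendsto_metrizable hu (tendsto_pi_nhds.2 hlim), C,
    fun y => le_of_tendsto' ((continuous_abs.tendsto _).comp (hlim y)) fun n => hC n y⟩

end BoundedMeasurable

namespace IsMarkovOperator

variable {α : Type*} [MeasurableSpace α] {Φ : (α → ℂ) → (α → ℂ)} {u v : α → ℝ}

theorem exists_apply_ofReal_eq_integral (hM : IsMarkovOperator Φ) (x : α) :
    ∃ P : Measure α, IsProbabilityMeasure P ∧ ∀ u : α → ℝ, IsBoundedMeasurable u →
      Φ (fun y => (u y : ℂ)) x = ↑(∫ y, u y ∂P) := by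
  obtain ⟨P, hP, hrep⟩ := hM x
  refine ⟨P, hP, fun u ⟨hu, C, hC⟩ => ?_⟩
  rw [hrep _ hu.complex_ofReal ⟨C, by simpa using hC⟩, integral_complex_ofReal]

theorem apply_ofReal (hM : IsMarkovOperator Φ) (hu : IsBoundedMeasurable u) (x : α) :
    Φ (fun y => (u y : ℂ)) x = reOp Φ u x := by
  obtain ⟨P, -, hrep⟩ := hM.exists_apply_ofReal_eq_integral x
  rw [reOp, hrep u hu, Complex.ofReal_re]

theorem exists_reOp_eq_integral (hM : IsMarkovOperator Φ) (x : α) :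
    ∃ P : Measure α, IsProbabilityMeasure P ∧ ∀ u : α → ℝ, IsBoundedMeasurable u →
      reOp Φ u x = ∫ y, u y ∂P := by
  obtain ⟨P, hP, hrep⟩ := hM.exists_apply_ofReal_eq_integral x
  exact ⟨P, hP, fun u hu => by rw [reOp, hrep u hu, Complex.ofReal_re]⟩

theorem reOp_mono (hM : IsMarkovOperator Φ) (hu : IsBoundedMeasurable u)
    (hv : IsBoundedMeasurable v) (huv : u ≤ v) : reOp Φ u ≤ reOp Φ v := fun x => by
  obtain ⟨P, hP, hrep⟩ := hM.exists_reOp_eq_integral x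
  rw [hrep u hu, hrep v hv]
  exact integral_mono (hu.integrable P) (hv.integrable P) huv

theorem reOp_const (hM : IsMarkovOperator Φ) (c : ℝ) (x : α) : reOp Φ (fun _ => c) x = c := by
  obtain ⟨P, hP, hrep⟩ := hM.exists_reOp_eq_integral x
  rw [hrep _ ⟨measurable_const, |c|, fun _ => le_rfl⟩]
  simp

theorem reOp_const_add_mul (hM : IsMarkovOperator Φ) (hu : IsBoundedMeasurable u) (a b : ℝ)
    (x : α) : reOp Φ (fun y => a + b * u y) x = a + b * reOp Φ u x := by
  obtain ⟨P, hP, hrep⟩ := hM.exists_reOp_eq_integral x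
  rw [hrep _ (hu.const_add_mul a b), hrep u hu,
    integral_add (integrable_const a) ((hu.integrable P).const_mul b), integral_const_mul]
  simp

theorem tendsto_reOp (hM : IsMarkovOperator Φ) {u : ℕ → α → ℝ} (hu : ∀ n, Measurable (u n))
    {C : ℝ} (hC : ∀ n y, |u n y| ≤ C) (hlim : ∀ y, Tendsto (fun n => u n y) atTop (𝓝 (v y)))
    (x : α) : Tendsto (fun n => reOp Φ (u n) x) atTop (𝓝 (reOp Φ v x)) := by
  obtain ⟨P, hP, hrep⟩ := hM.exists_reOp_eq_integral x
  rw [funext fun n => hrep (u n) ⟨hu n, C, hC n⟩,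
    hrep v (isBoundedMeasurable_of_tendsto hu hC hlim)]
  exact tendsto_integral_of_dominated_convergence (fun _ => C)
    (fun n => (hu n).aestronglyMeasurable) (integrable_const C) (fun n => ae_of_all _ (hC n))
    (ae_of_all _ hlim)

end IsMarkovOperator

theorem HasStrongFeller.continuous_reOp {α : Type*} [MeasurableSpace α] [TopologicalSpace α]
    {Φ : (α → ℂ) → (α → ℂ)} (hSF : HasStrongFeller Φ) {u : α → ℝ}
    (hu : IsBoundedMeasurable u) : Continuous (reOp Φ u) :=
  let ⟨hm, C, hC⟩ := hu
  Complex.continuous_re.comp (hSF _ hm.complex_ofReal ⟨C, by simpa using hC⟩)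

theorem exists_le_add_sub_mul_of_neg {X : Type*} [TopologicalSpace X] [CompactSpace X]
    {φ h : X → ℝ} (hφ : Continuous φ) (hh : Continuous h) {x : X} (hhx : h x = 0)
    (hneg : ∀ y ≠ x, h y < 0) {ε : ℝ} (hε : 0 < ε) :
    ∃ t ≥ 0, ∀ y, φ y ≤ φ x + ε - t * h y := by
  set S := {y | φ x + ε ≤ φ y}
  have hxS : x ∉ S := by simp [S, hε]
  have hS : ∀ y ∈ S, h y < 0 := fun y hy => hneg y (ne_of_mem_of_not_mem hy hxS)
  have hq : ContinuousOn (fun y => (φ y - φ x - ε) / -h y) S :=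
    ContinuousOn.div (by fun_prop) (by fun_prop) fun y hy => (neg_pos.2 (hS y hy)).ne'
  obtain ⟨T, hT⟩ := (isClosed_le continuous_const hφ).isCompact.bddAbove_image hq
  refine ⟨max T 0, le_max_right _ _, fun y => ?_⟩
  by_cases hy : y ∈ S
  · have hle : (φ y - φ x - ε) / -h y ≤ max T 0 := (hT ⟨y, hy, rfl⟩).trans (le_max_left _ _)
    rw [div_le_iff₀ (neg_pos.2 (hS y hy))] at hle
    linarith
  · have hhy : h y ≤ 0 := by
      rcases eq_or_ne y x with rfl | hyx
      exacts [hhx.le, (hneg y hyx).le]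
    have hy' : φ y < φ x + ε := by simpa [S] using hy
    have := mul_nonpos_of_nonneg_of_nonpos (le_max_right T 0) hhy
    linarith

theorem continuousAt_of_barrier_squeeze {X : Type*} [TopologicalSpace X] {φ h : X → ℝ} {x : X}
    (hh : ContinuousAt h x) (hhx : h x = 0)
    (hlow : ∀ ε > 0, ∃ t : ℝ, ∀ y, φ x - ε + t * h y ≤ φ y)
    (hup : ∀ ε > 0, ∃ t : ℝ, ∀ y, φ y ≤ φ x + ε - t * h y) : ContinuousAt φ x := by
  refine tendsto_order.2 ⟨fun a ha => ?_, fun a ha => ?_⟩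
  · obtain ⟨t, ht⟩ := hlow ((φ x - a) / 2) (by linarith)
    have hl : ContinuousAt (fun y => φ x - (φ x - a) / 2 + t * h y) x := by fun_prop
    filter_upwards [hl.eventually (eventually_gt_nhds
      (show a < φ x - (φ x - a) / 2 + t * h x by rw [hhx]; linarith))] with y hy
    exact hy.trans_le (ht y)
  · obtain ⟨t, ht⟩ := hup ((a - φ x) / 2) (by linarith)
    have hu : ContinuousAt (fun y => φ x + (a - φ x) / 2 - t * h y) x := by fun_prop
    filter_upwards [hu.eventually (eventually_lt_nhds
      (show φ x + (a - φ x) / 2 - t * h x < a by rw [hhx]; linarith))] with y hy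
    exact (ht y).trans_lt hy

section Solutions

variable {K : Type*} {U : Set K} {Φ : (U → ℂ) → (U → ℂ)}

def IsSubsolution (U : Set K) (Φ : (U → ℂ) → (U → ℂ)) (w : K → ℝ) : Prop :=
  ∀ x : U, w x ≤ reOp Φ (fun y : U => w y) x

def IsSupersolution (U : Set K) (Φ : (U → ℂ) → (U → ℂ)) (w : K → ℝ) : Prop :=
  ∀ x : U, reOp Φ (fun y : U => w y) x ≤ w x

theorem CondA.exists_real_barrier [TopologicalSpace K] (hA : CondA U Φ) {x : K} (hx : x ∈ Uᶜ) :
    ∃ h : K → ℝ, Continuous h ∧ h x = 0 ∧ (∀ y ≠ x, h y < 0) ∧ IsSubsolution U Φ h := by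
  obtain ⟨h, hhx, hneg, hsub⟩ := hA x hx
  have hreal : ∀ y, ((h y).re : ℂ) = h y := fun y => by
    rcases eq_or_ne y x with rfl | hy
    · simp [hhx]
    · exact Complex.ext rfl (by simpa using (Complex.lt_def.1 (hneg y hy)).2.symm)
  refine ⟨fun y => (h y).re, by fun_prop, by simp [hhx],
    fun y hy => by simpa using (Complex.lt_def.1 (hneg y hy)).1, fun u => ?_⟩
  simp only [reOp, hreal]
  exact (Complex.le_def.1 (hsub u)).1

variable [MeasurableSpace K]

theorem isSupersolution_const (hM : IsMarkovOperator Φ) (c : ℝ) :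
    IsSupersolution U Φ fun _ => c :=
  fun x => (hM.reOp_const c x).le

variable [TopologicalSpace K] [CompactSpace K] [OpensMeasurableSpace K] {w : K → ℝ}

theorem IsSubsolution.const_add_mul (hw : IsSubsolution U Φ w) (hM : IsMarkovOperator Φ)
    (hwc : Continuous w) (c : ℝ) {t : ℝ} (ht : 0 ≤ t) :
    IsSubsolution U Φ fun y => c + t * w y := fun x => by
  rw [hM.reOp_const_add_mul (hwc.isBoundedMeasurable.restrict U)]
  have := mul_le_mul_of_nonneg_left (hw x) ht
  linarith

theorem IsSubsolution.const_sub_mul (hw : IsSubsolution U Φ w) (hM : IsMarkovOperator Φ)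
    (hwc : Continuous w) (c : ℝ) {t : ℝ} (ht : 0 ≤ t) :
    IsSupersolution U Φ fun y => c - t * w y := fun x => by
  have hneg : (fun y : U => c - t * w y) = fun y : U => c + -t * w y := by ext; ring
  rw [hneg, hM.reOp_const_add_mul (hwc.isBoundedMeasurable.restrict U)]
  have := mul_le_mul_of_nonneg_left (hw x) ht
  linarith

end Solutions

section Psi

variable {K : Type*} {U : Set K} {Φ : (U → ℂ) → (U → ℂ)} {u v w : K → ℝ}

noncomputable def psiRe (U : Set K) (Φ : (U → ℂ) → (U → ℂ)) (u : K → ℝ) : K → ℝ :=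
  fun x => (psiFun U Φ (fun y => (u y : ℂ)) x).re

theorem psiRe_of_mem {x : K} (hx : x ∈ U) :
    psiRe U Φ u x = reOp Φ (fun y : U => u y) ⟨x, hx⟩ := by
  simp only [psiRe, psiFun, dif_pos hx, reOp]

theorem psiRe_of_not_mem {x : K} (hx : x ∉ U) : psiRe U Φ u x = u x := by
  simp [psiRe, psiFun, hx]

theorem psiRe_iterate_of_not_mem {x : K} (hx : x ∉ U) (n : ℕ) : (psiRe U Φ)^[n] u x = u x := by
  induction n with
  | zero => rfl
  | succ n ih => rw [Function.iterate_succ_apply', psiRe_of_not_mem hx, ih]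

variable [TopologicalSpace K] [MeasurableSpace K]

theorem continuousOn_of_eq_reOp (hSF : HasStrongFeller Φ) {v : U → ℝ}
    (hv : IsBoundedMeasurable v) (hw : ∀ x : U, w x = reOp Φ v x) : ContinuousOn w U := by
  rw [continuousOn_iff_continuous_domRestrict]
  convert hSF.continuous_reOp hv using 1
  exact funext hw

variable [CompactSpace K] [OpensMeasurableSpace K]

theorem psiFun_ofReal (hM : IsMarkovOperator Φ) (hu : Continuous u) :
    psiFun U Φ (fun y => (u y : ℂ)) = fun x => (psiRe U Φ u x : ℂ) := by
  funext x
  by_cases hx : x ∈ U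
  · rw [psiRe_of_mem hx, ← hM.apply_ofReal (hu.isBoundedMeasurable.restrict U)]
    exact dif_pos hx
  · simp [psiRe, psiFun, hx]

theorem psiRe_mono (hM : IsMarkovOperator Φ) (hu : Continuous u) (hv : Continuous v)
    (huv : u ≤ v) : psiRe U Φ u ≤ psiRe U Φ v := fun x => by
  by_cases hx : x ∈ U
  · rw [psiRe_of_mem hx, psiRe_of_mem hx]
    exact hM.reOp_mono (hu.isBoundedMeasurable.restrict U) (hv.isBoundedMeasurable.restrict U)
      (fun y => huv y) _
  · rw [psiRe_of_not_mem hx, psiRe_of_not_mem hx]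
    exact huv x

theorem IsSupersolution.psiRe_le (hw : IsSupersolution U Φ w) (hM : IsMarkovOperator Φ)
    (hu : Continuous u) (hwc : Continuous w) (huw : u ≤ w) : psiRe U Φ u ≤ w := fun x => by
  by_cases hx : x ∈ U
  · rw [psiRe_of_mem hx]
    exact (hM.reOp_mono (hu.isBoundedMeasurable.restrict U) (hwc.isBoundedMeasurable.restrict U)
      (fun y => huw y) _).trans (hw ⟨x, hx⟩)
  · rw [psiRe_of_not_mem hx]
    exact huw x

theorem IsSubsolution.le_psiRe (hw : IsSubsolution U Φ w) (hM : IsMarkovOperator Φ)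
    (hu : Continuous u) (hwc : Continuous w) (hwu : w ≤ u) : w ≤ psiRe U Φ u := fun x => by
  by_cases hx : x ∈ U
  · rw [psiRe_of_mem hx]
    exact (hw ⟨x, hx⟩).trans (hM.reOp_mono (hwc.isBoundedMeasurable.restrict U)
      (hu.isBoundedMeasurable.restrict U) (fun y => hwu y) _)
  · rw [psiRe_of_not_mem hx]
    exact hwu x

theorem continuousAt_of_sandwich (hM : IsMarkovOperator Φ) (hA : CondA U Φ) {x : K} (hx : x ∉ U)
    (hu : Continuous u) {φ : K → ℝ} (hφx : φ x = u x)
    (hsub : ∀ w, Continuous w → IsSubsolution U Φ w → w ≤ u → w ≤ φ)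
    (hsuper : ∀ w, Continuous w → IsSupersolution U Φ w → u ≤ w → φ ≤ w) :
    ContinuousAt φ x := by
  obtain ⟨h, hhc, hhx, hneg, hhsub⟩ := hA.exists_real_barrier hx
  refine continuousAt_of_barrier_squeeze hhc.continuousAt hhx (fun ε hε => ?_) (fun ε hε => ?_)
  · obtain ⟨t, ht, hle⟩ := exists_le_add_sub_mul_of_neg hu.neg hhc hhx hneg hε
    refine ⟨t, hsub _ (by fun_prop) (hhsub.const_add_mul hM hhc _ ht) fun y => ?_⟩
    have := hle y
    simp only [Pi.neg_apply] at this
    rw [hφx]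
    linarith
  · obtain ⟨t, ht, hle⟩ := exists_le_add_sub_mul_of_neg hu hhc hhx hneg hε
    exact ⟨t, hsuper _ (by fun_prop) (hhsub.const_sub_mul hM hhc _ ht) fun y => by
      rw [hφx]; exact hle y⟩

theorem continuous_psiRe (hUopen : IsOpen U) (hM : IsMarkovOperator Φ) (hSF : HasStrongFeller Φ)
    (hA : CondA U Φ) (hu : Continuous u) : Continuous (psiRe U Φ u) := by
  refine continuous_iff_continuousAt.2 fun x => ?_
  by_cases hx : x ∈ U
  · exact (continuousOn_of_eq_reOp hSF (hu.isBoundedMeasurable.restrict U)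
      fun y => psiRe_of_mem y.2).continuousAt (hUopen.mem_nhds hx)
  · exact continuousAt_of_sandwich hM hA hx hu (psiRe_of_not_mem hx)
      (fun w hwc hw hwu => hw.le_psiRe hM hu hwc hwu)
      (fun w hwc hw huw => hw.psiRe_le hM hu hwc huw)

theorem continuous_psiRe_iterate (hUopen : IsOpen U) (hM : IsMarkovOperator Φ)
    (hSF : HasStrongFeller Φ) (hA : CondA U Φ) (hu : Continuous u) (n : ℕ) :
    Continuous ((psiRe U Φ)^[n] u) := by
  induction n with
  | zero => exact hu
  | succ n ih =>
    rw [Function.iterate_succ_apply']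
    exact continuous_psiRe hUopen hM hSF hA ih

theorem iterate_psiFun_ofReal (hUopen : IsOpen U) (hM : IsMarkovOperator Φ)
    (hSF : HasStrongFeller Φ) (hA : CondA U Φ) (hu : Continuous u) (n : ℕ) :
    (psiFun U Φ)^[n] (fun y => (u y : ℂ)) = fun x => ((psiRe U Φ)^[n] u x : ℂ) := by
  induction n with
  | zero => rfl
  | succ n ih =>
    rw [Function.iterate_succ_apply', Function.iterate_succ_apply', ih,
      psiFun_ofReal hM (continuous_psiRe_iterate hUopen hM hSF hA hu n)]

theorem monotone_psiRe_iterate (hUopen : IsOpen U) (hM : IsMarkovOperator Φ)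
    (hSF : HasStrongFeller Φ) (hA : CondA U Φ) (hu : Continuous u) (hsub : IsSubsolution U Φ u) :
    Monotone fun n => (psiRe U Φ)^[n] u := by
  have hc := continuous_psiRe_iterate hUopen hM hSF hA hu
  refine monotone_nat_of_le_succ fun n => ?_
  induction n with
  | zero => exact hsub.le_psiRe hM hu hu le_rfl
  | succ n ih =>
    rw [Function.iterate_succ_apply', Function.iterate_succ_apply' _ (n + 1)]
    exact psiRe_mono hM (hc n) (hc (n + 1)) ih

theorem IsSupersolution.psiRe_iterate_le (hw : IsSupersolution U Φ w) (hUopen : IsOpen U)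
    (hM : IsMarkovOperator Φ) (hSF : HasStrongFeller Φ) (hA : CondA U Φ) (hu : Continuous u)
    (hwc : Continuous w) (huw : u ≤ w) (n : ℕ) : (psiRe U Φ)^[n] u ≤ w := by
  induction n with
  | zero => exact huw
  | succ n ih =>
    rw [Function.iterate_succ_apply']
    exact hw.psiRe_le hM (continuous_psiRe_iterate hUopen hM hSF hA hu n) hwc ih

theorem exists_tendstoUniformly_psiRe_iterate (hUopen : IsOpen U) (hM : IsMarkovOperator Φ)
    (hSF : HasStrongFeller Φ) (hA : CondA U Φ) (hu : Continuous u) (hsub : IsSubsolution U Φ u) :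
    ∃ g : K → ℝ, Continuous g ∧ TendstoUniformly (fun n => (psiRe U Φ)^[n] u) g atTop ∧
      (∀ x : U, reOp Φ (fun y : U => g y) x = g x) ∧ ∀ x ∉ U, g x = u x := by
  set F := fun n => (psiRe U Φ)^[n] u
  have hFc : ∀ n, Continuous (F n) := continuous_psiRe_iterate hUopen hM hSF hA hu
  have hmono : Monotone F := monotone_psiRe_iterate hUopen hM hSF hA hu hsub
  obtain ⟨-, C, hC⟩ := hu.isBoundedMeasurable
  have hFC : ∀ n y, |F n y| ≤ C := fun n y => abs_le.2
    ⟨(neg_le_of_abs_le (hC y)).trans (hmono n.zero_le y),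
      (isSupersolution_const hM C).psiRe_iterate_le hUopen hM hSF hA hu continuous_const
        (fun y => le_of_abs_le (hC y)) n y⟩
  set g := fun y => ⨆ n, F n y
  have hlim : ∀ y, Tendsto (F · y) atTop (𝓝 (g y)) := fun y =>
    tendsto_atTop_ciSup (fun m n hmn => hmono hmn y)
      ⟨C, by rintro _ ⟨n, rfl⟩; exact le_of_abs_le (hFC n y)⟩
  have hFU : ∀ n, Measurable fun y : U => F n y := fun n =>
    (hFc n).measurable.comp measurable_subtype_coe
  have hfix : ∀ x : U, reOp Φ (fun y : U => g y) x = g x := fun x => by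
    refine tendsto_nhds_unique (hM.tendsto_reOp hFU (fun n y => hFC n y) (fun y => hlim y) x) ?_
    convert (hlim x).comp (tendsto_add_atTop_nat 1) using 1
    funext n
    simp [F, Function.iterate_succ_apply', psiRe_of_mem x.2]
  have hbdry : ∀ x ∉ U, g x = u x := fun x hx => by simp [g, F, psiRe_iterate_of_not_mem hx]
  have hgc : Continuous g := by
    refine continuous_iff_continuousAt.2 fun x => ?_
    by_cases hx : x ∈ U
    · have hg : IsBoundedMeasurable fun y : U => g y :=
        isBoundedMeasurable_of_tendsto hFU (fun n y => hFC n y) fun y => hlim y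
      exact (continuousOn_of_eq_reOp hSF hg fun y => (hfix y).symm).continuousAt
        (hUopen.mem_nhds hx)
    · exact continuousAt_of_sandwich hM hA hx hu (hbdry x hx)
        (fun w _ _ hwu => hwu.trans fun y => ge_of_tendsto' (hlim y) fun n => hmono n.zero_le y)
        (fun w hwc hw huw y => le_of_tendsto' (hlim y)
          fun n => hw.psiRe_iterate_le hUopen hM hSF hA hu hwc huw n y)
  exact ⟨g, hgc, hmono.tendstoUniformly_of_forall_tendsto hFc hgc hlim, hfix, hbdry⟩

end Psi

theorem stmt6_general {K : Type*} [MetricSpace K] [CompactSpace K]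
    [MeasurableSpace K] [BorelSpace K]
    (U : Set K) (hUopen : IsOpen U)
    (Φ : (↥U → ℂ) → (↥U → ℂ))
    (hM : IsMarkovOperator Φ) (hSF : HasStrongFeller Φ)
    (hA : CondA U Φ)
    (f : C(K, ℂ)) (hreal : ∀ x : K, (f x).im = 0)
    (hsub : ∀ u : ↥U, f u.1 ≤ Φ (fun v : ↥U => f v.1) u) :
    (∀ n : ℕ, 1 ≤ n → ∀ x : K,
        (psiFun U Φ)^[n] ⇑f x ≤ (psiFun U Φ)^[n + 1] ⇑f x) ∧
    ∃ g : C(K, ℂ),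
      TendstoUniformly (fun n x => (psiFun U Φ)^[n] ⇑f x) (⇑g) atTop ∧
      (∀ u : ↥U, Φ (fun v : ↥U => g v.1) u = g u.1) ∧
      (∀ x ∈ Uᶜ, g x = f x) := by
  set u : K → ℝ := fun x => (f x).re
  have hu : Continuous u := by fun_prop
  have hf : ∀ x, (u x : ℂ) = f x := fun x => Complex.ext rfl (by simp [u, hreal x])
  have husub : IsSubsolution U Φ u := fun x => by
    simpa only [reOp, hf] using (Complex.le_def.1 (hsub x)).1
  have hiter : ∀ n, (psiFun U Φ)^[n] ⇑f = fun x => ((psiRe U Φ)^[n] u x : ℂ) := fun n => by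
    rw [← iterate_psiFun_ofReal hUopen hM hSF hA hu n]
    simp only [hf]
  obtain ⟨g, hgc, hlim, hfix, hbdry⟩ :=
    exists_tendstoUniformly_psiRe_iterate hUopen hM hSF hA hu husub
  refine ⟨fun n _ x => ?_, ⟨fun x => (g x : ℂ), by fun_prop⟩, ?_, fun x => ?_, fun x hx => ?_⟩
  · rw [hiter, hiter]
    exact Complex.real_le_real.2 (monotone_psiRe_iterate hUopen hM hSF hA hu husub n.le_succ x)
  · simp only [hiter]
    exact Complex.isometry_ofReal.uniformContinuous.comp_tendstoUniformly hlim
  · simp only [ContinuousMap.coe_mk]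
    rw [hM.apply_ofReal (hgc.isBoundedMeasurable.restrict U), hfix]
  · simp only [ContinuousMap.coe_mk, hbdry x hx, hf]

/-- If `f ∈ C(K)` is real-valued and `Φ (f_U) ≥ f_U` on `U`,
then `{Ψⁿ f}_{n≥1}` is monotone increasing and converges uniformly on `K`
to some `g ∈ C(K)` with `Φ (g_U) = g_U` on `U` and `g = f` on `∂U`. -/
theorem stmt6 {K : Type*} [MetricSpace K] [CompactSpace K]
    [MeasurableSpace K] [BorelSpace K]
    (U : Set K) (hUopen : IsOpen U) (hUdense : Dense U)
    (hbd : ∃ a b : K, a ∈ Uᶜ ∧ b ∈ Uᶜ ∧ a ≠ b)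
    (Φ : (↥U → ℂ) → (↥U → ℂ))
    (hM : IsMarkovOperator Φ) (hSF : HasStrongFeller Φ)
    (hA : CondA U Φ)
    (f : C(K, ℂ)) (hreal : ∀ x : K, (f x).im = 0)
    (hsub : ∀ u : ↥U, f u.1 ≤ Φ (fun v : ↥U => f v.1) u) :
    (∀ n : ℕ, 1 ≤ n → ∀ x : K,
        (psiFun U Φ)^[n] ⇑f x ≤ (psiFun U Φ)^[n + 1] ⇑f x) ∧
    ∃ g : C(K, ℂ),
      TendstoUniformly (fun n x => (psiFun U Φ)^[n] ⇑f x) (⇑g) atTop ∧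
      (∀ u : ↥U, Φ (fun v : ↥U => g v.1) u = g u.1) ∧
      (∀ x ∈ Uᶜ, g x = f x) :=
  stmt6_general U hUopen Φ hM hSF hA f hreal hsub
end
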